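/- The rename rule is admissible in minimal-logic natural deduction: for every set of formulas Γ and formulas α, α' with α ≈ α', the deductions Γ ⊢ α and Γ ⊢ α' are equivalent (Γ ⊢ α if and only if Γ ⊢ α'). -/

import Mathlib

/-- Variables, indexed by natural numbers. -/
structure FOVar where
  idx : ℕ
deriving DecidableEq

/-- Function symbols: an index and an arity. -/
structure FOFunc where
  idx : ℕ
  arity : ℕ
deriving DecidableEq

/-- Relation symbols: an index and an arity. -/
structure FORel where
  idx : ℕ
  arity : ℕ
deriving DecidableEq

/-- Length-indexed vectors. -/
inductive Vec (A : Type) : ℕ → Type where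
  | nil : Vec A 0
  | cons : ∀ {n}, A → Vec A n → Vec A (n + 1)

/-- A predicate holds on every element of a vector. -/
inductive Vec.All {A : Type} (P : A → Prop) : ∀ {n}, Vec A n → Prop where
  | nil : Vec.All P Vec.nil
  | cons : ∀ {n x} {xs : Vec A n}, P x → Vec.All P xs → Vec.All P (Vec.cons x xs)

/-- First-order terms. -/
inductive Term : Type where
  | varterm : FOVar → Term
  | functerm : (f : FOFunc) → Vec Term f.arity → Term

/-- First-order formulas. -/
inductive Formula : Type where
  | atom : (r : FORel) → Vec Term r.arity → Formula
  | imp : Formula → Formula → Formula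
  | and : Formula → Formula → Formula
  | or : Formula → Formula → Formula
  | all : FOVar → Formula → Formula
  | ex : FOVar → Formula → Formula

/-- The variable x does not occur in a term. -/
inductive NotInTerm (x : FOVar) : Term → Prop where
  | varterm : ∀ {y}, x ≠ y → NotInTerm x (Term.varterm y)
  | functerm : ∀ {f} {us : Vec Term f.arity},
      Vec.All (NotInTerm x) us → NotInTerm x (Term.functerm f us)

/-- The variable x does not occur in any term of a vector. -/
def NotInTerms {n : ℕ} (x : FOVar) (ts : Vec Term n) : Prop :=
  Vec.All (NotInTerm x) ts

/-- The variable x is not free in a formula. -/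
inductive NotFreeIn : FOVar → Formula → Prop where
  | atom : ∀ {x r} {ts : Vec Term r.arity},
      NotInTerms x ts → NotFreeIn x (Formula.atom r ts)
  | imp : ∀ {x α β}, NotFreeIn x α → NotFreeIn x β → NotFreeIn x (Formula.imp α β)
  | and : ∀ {x α β}, NotFreeIn x α → NotFreeIn x β → NotFreeIn x (Formula.and α β)
  | or : ∀ {x α β}, NotFreeIn x α → NotFreeIn x β → NotFreeIn x (Formula.or α β)
  | all_self : ∀ x α, NotFreeIn x (Formula.all x α)
  | ex_self : ∀ x α, NotFreeIn x (Formula.ex x α)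
  | all : ∀ {x α} (y : FOVar), NotFreeIn x α → NotFreeIn x (Formula.all y α)
  | ex : ∀ {x α} (y : FOVar), NotFreeIn x α → NotFreeIn x (Formula.ex y α)

mutual
/-- ⟨u⟩[x/t]≡v : substituting t for x in the term u yields v. -/
inductive TermSub : Term → FOVar → Term → Term → Prop where
  | var_eq : ∀ {x t}, TermSub (Term.varterm x) x t t
  | var_ne : ∀ {x t y}, x ≠ y → TermSub (Term.varterm y) x t (Term.varterm y)
  | functerm : ∀ {x t f} {us vs : Vec Term f.arity},
      TermsSub us x t vs → TermSub (Term.functerm f us) x t (Term.functerm f vs)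

/-- [us][x/t]≡vs : componentwise substitution in vectors of terms. -/
inductive TermsSub : ∀ {n}, Vec Term n → FOVar → Term → Vec Term n → Prop where
  | nil : ∀ {x t}, TermsSub Vec.nil x t Vec.nil
  | cons : ∀ {x t u v n} {us vs : Vec Term n},
      TermSub u x t v → TermsSub us x t vs →
      TermsSub (Vec.cons u us) x t (Vec.cons v vs)
end

/-- α[x/t]≡β : substituting t for all free occurrences of x in α yields β. -/
inductive FormulaSub : Formula → FOVar → Term → Formula → Prop where
  | ident : ∀ α x, FormulaSub α x (Term.varterm x) α
  | notfree : ∀ {α x t}, NotFreeIn x α → FormulaSub α x t α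
  | atom : ∀ {x t} (r : FORel) {us vs : Vec Term r.arity},
      TermsSub us x t vs → FormulaSub (Formula.atom r us) x t (Formula.atom r vs)
  | imp : ∀ {α α' β β' x t}, FormulaSub α x t α' → FormulaSub β x t β' →
      FormulaSub (Formula.imp α β) x t (Formula.imp α' β')
  | and : ∀ {α α' β β' x t}, FormulaSub α x t α' → FormulaSub β x t β' →
      FormulaSub (Formula.and α β) x t (Formula.and α' β')
  | or : ∀ {α α' β β' x t}, FormulaSub α x t α' → FormulaSub β x t β' →
      FormulaSub (Formula.or α β) x t (Formula.or α' β')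
  | all_self : ∀ {t} x α, FormulaSub (Formula.all x α) x t (Formula.all x α)
  | ex_self : ∀ {t} x α, FormulaSub (Formula.ex x α) x t (Formula.ex x α)
  | all : ∀ {α β x y t}, x ≠ y → NotInTerm y t → FormulaSub α x t β →
      FormulaSub (Formula.all y α) x t (Formula.all y β)
  | ex : ∀ {α β x y t}, x ≠ y → NotInTerm y t → FormulaSub α x t β →
      FormulaSub (Formula.ex y α) x t (Formula.ex y β)

/-- The term t is free for the variable x in a formula. -/
inductive FreeFor (t : Term) (x : FOVar) : Formula → Prop where
  | notfree : ∀ {α}, NotFreeIn x α → FreeFor t x α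
  | atom : ∀ r us, FreeFor t x (Formula.atom r us)
  | imp : ∀ {α β}, FreeFor t x α → FreeFor t x β → FreeFor t x (Formula.imp α β)
  | and : ∀ {α β}, FreeFor t x α → FreeFor t x β → FreeFor t x (Formula.and α β)
  | or : ∀ {α β}, FreeFor t x α → FreeFor t x β → FreeFor t x (Formula.or α β)
  | all_self : ∀ α, FreeFor t x (Formula.all x α)
  | ex_self : ∀ α, FreeFor t x (Formula.ex x α)
  | all : ∀ {α y}, NotInTerm y t → FreeFor t x α → FreeFor t x (Formula.all y α)
  | ex : ∀ {α y}, NotInTerm y t → FreeFor t x α → FreeFor t x (Formula.ex y α)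

/-- The variable x appears nowhere (free or bound) in a formula. -/
inductive FreshIn (x : FOVar) : Formula → Prop where
  | atom : ∀ {r} {ts : Vec Term r.arity}, NotInTerms x ts → FreshIn x (Formula.atom r ts)
  | imp : ∀ {α β}, FreshIn x α → FreshIn x β → FreshIn x (Formula.imp α β)
  | and : ∀ {α β}, FreshIn x α → FreshIn x β → FreshIn x (Formula.and α β)
  | or : ∀ {α β}, FreshIn x α → FreshIn x β → FreshIn x (Formula.or α β)
  | all : ∀ {α y}, y ≠ x → FreshIn x α → FreshIn x (Formula.all y α)
  | ex : ∀ {α y}, y ≠ x → FreshIn x α → FreshIn x (Formula.ex y α)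

/-- Formula equivalence: equality up to renaming of bound variables. -/
inductive FormulaEquiv : Formula → Formula → Prop where
  | atom : ∀ r ts, FormulaEquiv (Formula.atom r ts) (Formula.atom r ts)
  | imp : ∀ {α β α' β'}, FormulaEquiv α α' → FormulaEquiv β β' →
      FormulaEquiv (Formula.imp α β) (Formula.imp α' β')
  | and : ∀ {α β α' β'}, FormulaEquiv α α' → FormulaEquiv β β' →
      FormulaEquiv (Formula.and α β) (Formula.and α' β')
  | or : ∀ {α β α' β'}, FormulaEquiv α α' → FormulaEquiv β β' →
      FormulaEquiv (Formula.or α β) (Formula.or α' β')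
  | all : ∀ {α α'} (x : FOVar), FormulaEquiv α α' → FormulaEquiv (Formula.all x α) (Formula.all x α')
  | ex : ∀ {α α'} (x : FOVar), FormulaEquiv α α' → FormulaEquiv (Formula.ex x α) (Formula.ex x α')
  | all_rename : ∀ {α β β' x y}, NotFreeIn y α →
      FormulaSub α x (Term.varterm y) β → FormulaEquiv β β' →
      FormulaEquiv (Formula.all x α) (Formula.all y β')
  | ex_rename : ∀ {α β β' x y}, NotFreeIn y α →
      FormulaSub α x (Term.varterm y) β → FormulaEquiv β β' →
      FormulaEquiv (Formula.ex x α) (Formula.ex y β')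
  | all_rename' : ∀ {α α' β' x y}, FormulaEquiv α α' → NotFreeIn y α' →
      FormulaSub α' x (Term.varterm y) β' →
      FormulaEquiv (Formula.all x α) (Formula.all y β')
  | ex_rename' : ∀ {α α' β' x y}, FormulaEquiv α α' → NotFreeIn y α' →
      FormulaSub α' x (Term.varterm y) β' →
      FormulaEquiv (Formula.ex x α) (Formula.ex y β')

/-- Natural deduction for minimal first-order logic. -/
inductive Deduction : Set Formula → Formula → Prop where
  | assume : ∀ (α : Formula), Deduction {α} α
  | close : ∀ {Γ Δ : Set Formula} {α}, Γ ⊆ Δ → Deduction Γ α → Deduction Δ α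
  | arrowintro : ∀ {Γ β} (α : Formula), Deduction Γ β →
      Deduction (Γ \ {α}) (Formula.imp α β)
  | arrowelim : ∀ {Γ₁ Γ₂ α β}, Deduction Γ₁ (Formula.imp α β) → Deduction Γ₂ α →
      Deduction (Γ₁ ∪ Γ₂) β
  | conjintro : ∀ {Γ₁ Γ₂ α β}, Deduction Γ₁ α → Deduction Γ₂ β →
      Deduction (Γ₁ ∪ Γ₂) (Formula.and α β)
  | conjelim : ∀ {Γ₁ Γ₂ α β γ}, Deduction Γ₁ (Formula.and α β) → Deduction Γ₂ γ →
      Deduction (Γ₁ ∪ (Γ₂ \ {α, β})) γ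
  | disjintro1 : ∀ {Γ α} (β : Formula), Deduction Γ α → Deduction Γ (Formula.or α β)
  | disjintro2 : ∀ {Γ β} (α : Formula), Deduction Γ β → Deduction Γ (Formula.or α β)
  | disjelim : ∀ {Γ₁ Γ₂ Γ₃ α β γ}, Deduction Γ₁ (Formula.or α β) →
      Deduction Γ₂ γ → Deduction Γ₃ γ →
      Deduction (Γ₁ ∪ (Γ₂ \ {α}) ∪ (Γ₃ \ {β})) γ
  | univintro : ∀ {Γ α} (x : FOVar), (∀ γ ∈ Γ, NotFreeIn x γ) →
      Deduction Γ α → Deduction Γ (Formula.all x α)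
  | univelim : ∀ {Γ α x β} (t : Term), FormulaSub α x t β →
      Deduction Γ (Formula.all x α) → Deduction Γ β
  | existintro : ∀ {Γ α β} (t : Term) (x : FOVar), FormulaSub α x t β →
      Deduction Γ β → Deduction Γ (Formula.ex x α)
  | existelim : ∀ {Γ₁ Γ₂ α β x}, NotFreeIn x β → (∀ γ ∈ Γ₂ \ {α}, NotFreeIn x γ) →
      Deduction Γ₁ (Formula.ex x α) → Deduction Γ₂ β →
      Deduction (Γ₁ ∪ (Γ₂ \ {α})) β

/-- ⊥: the atom of a fixed nullary relation symbol. -/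
def Formula.bot : Formula := Formula.atom ⟨0, 0⟩ Vec.nil

/-- ¬α is α ⇒ ⊥. -/
def Formula.neg (α : Formula) : Formula := Formula.imp α Formula.bot

/-!
Each clause of `FormulaEquiv` is matched by a derivation in both directions between single
formulas. The connective clauses are congruences built from the introduction and elimination
rules. For a renaming `Λ x α ≈ Λ y β` with `β = α[x/y]` and `y` not free in `α`, one direction
is `∀⁻` at `y` followed by `∀⁺` on `y`; the other is the same argument applied to the inverse
substitution `β[y/x] = α`, which is available because `x` is not free in `β`. The existential
case is dual. Cutting a derivation of `α` against one of `{α} ⊢ α'` then gives the theorem.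
-/

mutual
theorem TermSub.rename_symm {x y : FOVar} : ∀ {u v : Term},
    NotInTerm y u → TermSub u x (Term.varterm y) v →
    NotInTerm x v ∧ TermSub v y (Term.varterm x) u
  | _, _, .varterm hyx, .var_eq => ⟨.varterm hyx.symm, .var_eq⟩
  | _, _, .varterm hyz, .var_ne hxz => ⟨.varterm hxz, .var_ne hyz⟩
  | _, _, .functerm hus, .functerm hsub =>
      let h := TermsSub.rename_symm hus hsub
      ⟨.functerm h.1, .functerm h.2⟩

theorem TermsSub.rename_symm {x y : FOVar} : ∀ {n : ℕ} {us vs : Vec Term n},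
    Vec.All (NotInTerm y) us → TermsSub us x (Term.varterm y) vs →
    Vec.All (NotInTerm x) vs ∧ TermsSub vs y (Term.varterm x) us
  | _, _, _, .nil, .nil => ⟨.nil, .nil⟩
  | _, _, _, .cons hu hus, .cons hsub hsubs =>
      let h := TermSub.rename_symm hu hsub
      let hs := TermsSub.rename_symm hus hsubs
      ⟨.cons h.1 hs.1, .cons h.2 hs.2⟩
end

theorem FormulaSub.rename_symm {α β : Formula} {x y : FOVar} (hy : NotFreeIn y α)
    (h : FormulaSub α x (Term.varterm y) β) :
    NotFreeIn x β ∧ FormulaSub β y (Term.varterm x) α := by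
  generalize ht : Term.varterm y = t at h
  induction h with
  | ident α x => cases ht; exact ⟨hy, .ident α y⟩
  | notfree hx => exact ⟨hx, .notfree hy⟩
  | atom r hsub =>
    subst ht
    cases hy with
    | atom hus =>
      obtain ⟨hx, hsub'⟩ := TermsSub.rename_symm hus hsub
      exact ⟨.atom hx, .atom r hsub'⟩
  | imp _ _ ih₁ ih₂ =>
    cases hy with
    | imp hy₁ hy₂ =>
      obtain ⟨hx₁, h₁⟩ := ih₁ hy₁ ht
      obtain ⟨hx₂, h₂⟩ := ih₂ hy₂ ht
      exact ⟨.imp hx₁ hx₂, .imp h₁ h₂⟩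
  | and _ _ ih₁ ih₂ =>
    cases hy with
    | and hy₁ hy₂ =>
      obtain ⟨hx₁, h₁⟩ := ih₁ hy₁ ht
      obtain ⟨hx₂, h₂⟩ := ih₂ hy₂ ht
      exact ⟨.and hx₁ hx₂, .and h₁ h₂⟩
  | or _ _ ih₁ ih₂ =>
    cases hy with
    | or hy₁ hy₂ =>
      obtain ⟨hx₁, h₁⟩ := ih₁ hy₁ ht
      obtain ⟨hx₂, h₂⟩ := ih₂ hy₂ ht
      exact ⟨.or hx₁ hx₂, .or h₁ h₂⟩
  | all_self x α => exact ⟨.all_self x α, .notfree hy⟩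
  | ex_self x α => exact ⟨.ex_self x α, .notfree hy⟩
  | all hxz hzt _ ih =>
    subst ht
    obtain ⟨hyz⟩ := hzt
    cases hy with
    | all_self => exact absurd rfl hyz
    | all _ hy =>
      obtain ⟨hx, h⟩ := ih hy rfl
      exact ⟨.all _ hx, .all hyz.symm (.varterm hxz.symm) h⟩
  | ex hxz hzt _ ih =>
    subst ht
    obtain ⟨hyz⟩ := hzt
    cases hy with
    | ex_self => exact absurd rfl hyz
    | ex _ hy =>
      obtain ⟨hx, h⟩ := ih hy rfl
      exact ⟨.ex _ hx, .ex hyz.symm (.varterm hxz.symm) h⟩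

namespace Deduction

theorem cut {Γ Δ : Set Formula} {α β : Formula} (hα : Deduction Γ α) (hβ : Deduction Δ β) :
    Deduction (Γ ∪ (Δ \ {α})) β :=
  close (Set.union_comm _ _).subset (arrowelim (arrowintro α hβ) hα)

theorem trans {Γ : Set Formula} {α β : Formula} (hα : Deduction Γ α) (hβ : Deduction {α} β) :
    Deduction Γ β :=
  close (by simp) (cut hα hβ)

theorem imp_congr {α α' β β' : Formula} (hα : Deduction {α'} α) (hβ : Deduction {β} β') :
    Deduction {Formula.imp α β} (Formula.imp α' β') :=
  close (Set.sdiff_subset_iff.2 (Set.union_comm _ _).subset)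
    (arrowintro α' ((arrowelim (assume _) hα).trans hβ))

theorem and_congr {α α' β β' : Formula} (hα : Deduction {α} α') (hβ : Deduction {β} β') :
    Deduction {Formula.and α β} (Formula.and α' β') :=
  close (by simp) (conjelim (assume (Formula.and α β)) (conjintro hα hβ))

theorem or_congr {α α' β β' : Formula} (hα : Deduction {α} α') (hβ : Deduction {β} β') :
    Deduction {Formula.or α β} (Formula.or α' β') :=
  close (by simp) (disjelim (assume (Formula.or α β)) (disjintro1 β' hα) (disjintro2 α' hβ))

theorem all_congr {α α' : Formula} (x : FOVar) (h : Deduction {α} α') :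
    Deduction {Formula.all x α} (Formula.all x α') :=
  univintro x (by rintro γ rfl; exact .all_self x α)
    ((univelim (Term.varterm x) (.ident α x) (assume _)).trans h)

theorem ex_congr {α α' : Formula} (x : FOVar) (h : Deduction {α} α') :
    Deduction {Formula.ex x α} (Formula.ex x α') :=
  close (by simp)
    (existelim (.ex_self x α') (by simp) (assume (Formula.ex x α)) (existintro (Term.varterm x) x (.ident α' x) h))

theorem all_rename {α β : Formula} {x y : FOVar} (hy : NotFreeIn y α)
    (h : FormulaSub α x (Term.varterm y) β) :
    Deduction {Formula.all x α} (Formula.all y β) :=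
  univintro y (by rintro γ rfl; exact .all x hy) (univelim _ h (assume _))

theorem ex_rename {α β : Formula} {x y : FOVar} (hy : NotFreeIn y α)
    (h : FormulaSub α x (Term.varterm y) β) :
    Deduction {Formula.ex y β} (Formula.ex x α) :=
  close (by simp) (existelim (.ex x hy) (by simp) (assume (Formula.ex y β)) (existintro _ x h (assume β)))

end Deduction

def Interderivable (α β : Formula) : Prop :=
  Deduction {α} β ∧ Deduction {β} α

namespace Interderivable

theorem refl (α : Formula) : Interderivable α α :=
  ⟨.assume α, .assume α⟩

theorem trans {α β γ : Formula} (h₁ : Interderivable α β) (h₂ : Interderivable β γ) :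
    Interderivable α γ :=
  ⟨h₁.1.trans h₂.1, h₂.2.trans h₁.2⟩

theorem imp {α α' β β' : Formula} (hα : Interderivable α α') (hβ : Interderivable β β') :
    Interderivable (Formula.imp α β) (Formula.imp α' β') :=
  ⟨.imp_congr hα.2 hβ.1, .imp_congr hα.1 hβ.2⟩

theorem and {α α' β β' : Formula} (hα : Interderivable α α') (hβ : Interderivable β β') :
    Interderivable (Formula.and α β) (Formula.and α' β') :=
  ⟨.and_congr hα.1 hβ.1, .and_congr hα.2 hβ.2⟩

theorem or {α α' β β' : Formula} (hα : Interderivable α α') (hβ : Interderivable β β') :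
    Interderivable (Formula.or α β) (Formula.or α' β') :=
  ⟨.or_congr hα.1 hβ.1, .or_congr hα.2 hβ.2⟩

theorem all {α α' : Formula} (x : FOVar) (h : Interderivable α α') :
    Interderivable (Formula.all x α) (Formula.all x α') :=
  ⟨.all_congr x h.1, .all_congr x h.2⟩

theorem ex {α α' : Formula} (x : FOVar) (h : Interderivable α α') :
    Interderivable (Formula.ex x α) (Formula.ex x α') :=
  ⟨.ex_congr x h.1, .ex_congr x h.2⟩

theorem all_rename {α β : Formula} {x y : FOVar} (hy : NotFreeIn y α)
    (h : FormulaSub α x (Term.varterm y) β) :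
    Interderivable (Formula.all x α) (Formula.all y β) :=
  let ⟨hx, h'⟩ := h.rename_symm hy
  ⟨.all_rename hy h, .all_rename hx h'⟩

theorem ex_rename {α β : Formula} {x y : FOVar} (hy : NotFreeIn y α)
    (h : FormulaSub α x (Term.varterm y) β) :
    Interderivable (Formula.ex x α) (Formula.ex y β) :=
  let ⟨hx, h'⟩ := h.rename_symm hy
  ⟨.ex_rename hx h', .ex_rename hy h⟩

end Interderivable

theorem FormulaEquiv.interderivable {α α' : Formula} (h : FormulaEquiv α α') :
    Interderivable α α' := by
  induction h with
  | atom r ts => exact .refl _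
  | imp _ _ ih₁ ih₂ => exact ih₁.imp ih₂
  | and _ _ ih₁ ih₂ => exact ih₁.and ih₂
  | or _ _ ih₁ ih₂ => exact ih₁.or ih₂
  | all x _ ih => exact ih.all x
  | ex x _ ih => exact ih.ex x
  | all_rename hy hsub _ ih => exact (Interderivable.all_rename hy hsub).trans (ih.all _)
  | ex_rename hy hsub _ ih => exact (Interderivable.ex_rename hy hsub).trans (ih.ex _)
  | all_rename' _ hy hsub ih => exact (ih.all _).trans (Interderivable.all_rename hy hsub)
  | ex_rename' _ hy hsub ih => exact (ih.ex _).trans (Interderivable.ex_rename hy hsub)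

/-- The rename rule: equivalent formulas are equivalently derivable. -/
theorem rename_iff {Γ : Set Formula} {α α' : Formula} (h : FormulaEquiv α α') :
    Deduction Γ α ↔ Deduction Γ α' :=
  ⟨fun d => d.trans h.interderivable.1, fun d => d.trans h.interderivable.2⟩
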